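/- Let N ≥ 4 be an integer divisible by 4. Then ∑_{s=1}^{N/4−1} 1/sin²(2πs/N) = (N² − 16)/24. -/

import Mathlib

/-!
With `ζ = exp (2πi / n)` one has `1 / sin² (π s / n) = -4 ζ^s / (1 - ζ^s)²`. For an `n`-th root of
unity `w ≠ 1`, `∑_{j<n} j (n - j) w^j = 2 n w / (1 - w)²`, since the second difference of `j (n - j)`
is constant. Summing over all `n`-th roots of unity kills every coefficient but the one at `j = 0`,
which gives `∑_{s=1}^{n-1} 1 / sin² (π s / n) = (n² - 1) / 3`. For `n = N / 2` the terms `s` and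
`n - s` agree and the middle one is `1`, so half of the sum is `(n² - 4) / 6 = (N² - 16) / 24`.
-/

open Finset

theorem geom_sum_eq_zero_of_pow_eq_one {K : Type*} [Field K] {w : K} {n : ℕ}
    (hw : w ^ n = 1) (hw1 : w ≠ 1) : ∑ i ∈ range n, w ^ i = 0 := by
  rw [geom_sum_eq hw1, hw, sub_self, zero_div]

section CommRing

variable {R : Type*} [CommRing R]

theorem two_mul_sum_range_natCast (n : ℕ) : 2 * ∑ j ∈ range n, (j : R) = n * (n - 1) := by
  induction n with
  | zero => simp
  | succ n ih => rw [sum_range_succ, mul_add, ih]; push_cast; ring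

theorem six_mul_sum_range_mul_sub (n : ℕ) :
    6 * ∑ j ∈ range n, (j : R) * (n - j) = n * (n ^ 2 - 1) := by
  induction n with
  | zero => simp
  | succ n ih =>
    have hgauss := two_mul_sum_range_natCast (R := R) n
    have hsplit : ∑ j ∈ range n, (j : R) * ((n + 1 : ℕ) - j)
        = ∑ j ∈ range n, (j : R) * (n - j) + ∑ j ∈ range n, (j : R) := by
      rw [← sum_add_distrib]; push_cast; exact sum_congr rfl fun j _ ↦ by ring
    rw [sum_range_succ, hsplit]
    push_cast
    linear_combination ih + 3 * hgauss

theorem one_sub_mul_sum_range_mul_pow (w : R) (n : ℕ) :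
    (1 - w) * ∑ j ∈ range n, (j : R) * w ^ j = w * ∑ j ∈ range n, w ^ j - n * w ^ n := by
  induction n with
  | zero => simp
  | succ n ih => rw [sum_range_succ, sum_range_succ, mul_add, ih]; push_cast; ring

theorem one_sub_sq_mul_sum_range_mul_sub_mul_pow (w : R) (n : ℕ) :
    (1 - w) ^ 2 * ∑ j ∈ range n, (j : R) * (n - j) * w ^ j
      = (n + 1) * w - 2 * w * ∑ j ∈ range n, w ^ j + (n - 1) * w ^ (n + 1) := by
  induction n with
  | zero => simp
  | succ n ih =>
    have hT := one_sub_mul_sum_range_mul_pow w n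
    have hsplit : ∑ j ∈ range n, (j : R) * ((n + 1 : ℕ) - j) * w ^ j
        = ∑ j ∈ range n, (j : R) * (n - j) * w ^ j + ∑ j ∈ range n, (j : R) * w ^ j := by
      rw [← sum_add_distrib]; push_cast; exact sum_congr rfl fun j _ ↦ by ring
    rw [sum_range_succ, hsplit, sum_range_succ]
    push_cast
    linear_combination ih + (1 - w) * hT + w * mul_neg_geom_sum w n

end CommRing

section Field

variable {K : Type*} [Field K]

theorem sum_range_mul_sub_mul_pow_of_pow_eq_one {w : K} {n : ℕ} (hw : w ^ n = 1) (hw1 : w ≠ 1) :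
    ∑ j ∈ range n, (j : K) * (n - j) * w ^ j = 2 * n * w / (1 - w) ^ 2 := by
  have h := one_sub_sq_mul_sum_range_mul_sub_mul_pow w n
  rw [geom_sum_eq_zero_of_pow_eq_one hw hw1, pow_succ w n, hw] at h
  rw [eq_div_iff (pow_ne_zero 2 (sub_ne_zero.mpr hw1.symm))]
  linear_combination h

theorem IsPrimitiveRoot.sum_range_sum_range_mul_pow {ζ : K} {n : ℕ} (hζ : IsPrimitiveRoot ζ n)
    (f : ℕ → K) : ∑ s ∈ range n, ∑ j ∈ range n, f j * (ζ ^ s) ^ j = n * f 0 := by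
  rcases n.eq_zero_or_pos with rfl | hn
  · simp
  have horth : ∀ j ∈ range n, ∑ s ∈ range n, (ζ ^ j) ^ s = if j = 0 then (n : K) else 0 := by
    intro j hj
    split_ifs with h0
    · simp [h0]
    · exact geom_sum_eq_zero_of_pow_eq_one (by rw [← pow_mul, pow_mul', hζ.pow_eq_one, one_pow])
        (hζ.pow_ne_one_of_pos_of_lt h0 (mem_range.mp hj))
  rw [sum_comm]
  simp_rw [pow_right_comm ζ _ _, ← mul_sum]
  rw [sum_congr rfl fun j hj ↦ congrArg (f j * ·) (horth j hj)]
  simp [hn, mul_comm]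

theorem IsPrimitiveRoot.twelve_mul_sum_pow_div_one_sub_pow_sq {ζ : K} {n : ℕ}
    (hζ : IsPrimitiveRoot ζ n) (hn : 0 < n) :
    12 * ∑ s ∈ Ico 1 n, ζ ^ s / (1 - ζ ^ s) ^ 2 = 1 - (n : K) ^ 2 := by
  have : NeZero n := ⟨hn.ne'⟩
  have hnK : (n : K) ≠ 0 := hζ.neZero'.out
  set V : K → K := fun w ↦ ∑ j ∈ range n, (j : K) * (n - j) * w ^ j
  have hV : ∀ s ∈ Ico 1 n, V (ζ ^ s) = 2 * n * (ζ ^ s / (1 - ζ ^ s) ^ 2) := by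
    intro s hs
    obtain ⟨hs1, hsn⟩ := mem_Ico.mp hs
    rw [← mul_div_assoc]
    exact sum_range_mul_sub_mul_pow_of_pow_eq_one
      (by rw [pow_right_comm, hζ.pow_eq_one, one_pow]) (hζ.pow_ne_one_of_pos_of_lt (by omega) hsn)
  have hsum : ∑ s ∈ range n, V (ζ ^ s) = 0 := by
    simpa using hζ.sum_range_sum_range_mul_pow fun j ↦ (j : K) * (n - j)
  rw [sum_range_eq_add_Ico _ hn, sum_congr rfl hV, ← mul_sum] at hsum
  have hV1 : 6 * V (ζ ^ 0) = n * (n ^ 2 - 1) := by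
    simpa [V] using six_mul_sum_range_mul_sub (R := K) n
  apply mul_left_cancel₀ hnK
  linear_combination 6 * hsum - hV1

end Field

/-- Also true when `sin z = 0`: then `exp (2 z I) = 1` and both sides are junk `0`. -/
theorem Complex.one_div_sin_sq (z : ℂ) :
    1 / sin z ^ 2 = -4 * exp (2 * z * I) / (1 - exp (2 * z * I)) ^ 2 := by
  have hsin : sin z ^ 2 = -(1 - exp (2 * z * I)) ^ 2 / (4 * exp (2 * z * I)) := by
    have hu : exp (2 * z * I) = exp (z * I) ^ 2 := by
      rw [← exp_nat_mul]; push_cast; ring_nf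
    rw [sin, neg_mul, exp_neg, hu]
    field_simp
    rw [I_sq]
    ring
  rw [hsin, one_div, neg_div, inv_neg, inv_div]
  ring

open Real in
theorem Real.sum_Ico_one_div_sin_sq {n : ℕ} (hn : 0 < n) :
    ∑ s ∈ Ico 1 n, 1 / sin (π * s / n) ^ 2 = ((n : ℝ) ^ 2 - 1) / 3 := by
  set ζ := Complex.exp (2 * π * Complex.I / n)
  have hterm : ∀ s : ℕ, ((1 / sin (π * s / n) ^ 2 : ℝ) : ℂ) = -4 * (ζ ^ s / (1 - ζ ^ s) ^ 2) := by
    intro s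
    have hζs : ζ ^ s = Complex.exp (2 * (π * s / n) * Complex.I) := by
      rw [← Complex.exp_nat_mul]; ring_nf
    push_cast
    rw [Complex.one_div_sin_sq, hζs]
    ring
  have h12 := (Complex.isPrimitiveRoot_exp n hn.ne').twelve_mul_sum_pow_div_one_sub_pow_sq hn
  apply Complex.ofReal_injective
  rw [Complex.ofReal_sum, sum_congr rfl fun s _ ↦ hterm s, ← mul_sum]
  push_cast
  linear_combination (-1 / 3 : ℂ) * h12

open Real in
theorem Real.sum_Ico_one_div_sin_sq_half {m : ℕ} (hm : 0 < m) :
    ∑ s ∈ Ico 1 m, 1 / sin (π * s / (2 * m)) ^ 2 = 2 * ((m : ℝ) ^ 2 - 1) / 3 := by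
  set g : ℕ → ℝ := fun s ↦ 1 / sin (π * s / (2 * m)) ^ 2
  have hfull : ∑ s ∈ Ico 1 (2 * m), g s = ((2 * m : ℝ) ^ 2 - 1) / 3 := by
    simpa [g] using sum_Ico_one_div_sin_sq (n := 2 * m) (by omega)
  have hmid : g m = 1 := by
    simp only [g]
    rw [show π * m / (2 * m) = π / 2 by field_simp, sin_pi_div_two]
    norm_num
  have hreflect : ∑ s ∈ Ico (m + 1) (2 * m), g s = ∑ s ∈ Ico 1 m, g s := by
    have h := sum_Ico_reflect g 1 (show m ≤ 2 * m + 1 by omega)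
    rw [show 2 * m + 1 - m = m + 1 by omega, show 2 * m + 1 - 1 = 2 * m by omega] at h
    rw [← h]
    refine sum_congr rfl fun s hs ↦ ?_
    have hs2m : s ≤ 2 * m := by have := mem_Ico.mp hs; omega
    simp only [g]
    rw [Nat.cast_sub hs2m, ← sin_pi_sub]
    push_cast
    congr 3
    field_simp
    ring
  rw [← sum_Ico_consecutive g (show 1 ≤ m by omega) (show m ≤ 2 * m by omega),
    sum_eq_sum_Ico_succ_bot (show m < 2 * m by omega), hmid, hreflect] at hfull
  linear_combination hfull / 2

theorem sum_inv_sin_sq_even (N : ℕ) (hN4 : 4 ∣ N) (hN : 4 ≤ N) :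
    ∑ s ∈ Finset.Icc 1 (N / 4 - 1),
        1 / Real.sin (2 * Real.pi * s / N) ^ 2
      = ((N : ℝ) ^ 2 - 16) / 24 := by
  obtain ⟨m, rfl⟩ := hN4
  have hm : 0 < m := by omega
  have hIcc : Icc 1 (4 * m / 4 - 1) = Ico 1 m := by
    ext s; simp only [mem_Icc, mem_Ico]; omega
  have harg : ∀ s : ℕ, 2 * Real.pi * s / ((4 * m : ℕ) : ℝ) = Real.pi * s / (2 * m) := by
    intro s; push_cast; field_simp; ring
  simp only [hIcc, harg]
  rw [Real.sum_Ico_one_div_sin_sq_half hm]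
  push_cast
  ring
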